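/- Uniform Gronwall lemma: let r > 0 and let y, a, b : [t₀, ∞) → ℝ be nonnegative continuous functions with y differentiable, satisfying y'(t) ≤ a(t)·y(t) + b(t) for all t ≥ t₀. Suppose there are constants a₁, a₂, a₃ ≥ 0 such that for every t ≥ t₀: ∫_t^{t+r} a(s) ds ≤ a₁, ∫_t^{t+r} b(s) ds ≤ a₂, and ∫_t^{t+r} y(s) ds ≤ a₃. Then y(t + r) ≤ (a₃/r + a₂)·e^{a₁} for all t ≥ t₀. -/

import Mathlib

/-!
For every `s ∈ [t, t + r]`, Gronwall's inequality on `[s, t + r]` gives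
`y (t + r) ≤ (y s + a₂) e^{a₁}`, since the integrals of the nonnegative `a` and `b` over
`[s, t + r]` are at most those over `[t, t + r]`. Averaging this in `s` over `[t, t + r]` replaces
`y s` by `(1/r) ∫_t^{t+r} y ≤ a₃ / r`.
-/

open Set MeasureTheory intervalIntegral

theorem hasDerivAt_integral_of_continuousOn_Icc {f : ℝ → ℝ} {s T u : ℝ}
    (hf : ContinuousOn f (Icc s T)) (hu : u ∈ Ioo s T) :
    HasDerivAt (fun v => ∫ σ in s..v, f σ) (f u) u :=
  integral_hasDerivAt_right
    ((hf.mono (Icc_subset_Icc_right hu.2.le)).intervalIntegrable_of_Icc hu.1.le)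
    ((hf.mono Ioo_subset_Icc_self).stronglyMeasurableAtFilter isOpen_Ioo u hu)
    (hf.continuousAt (Icc_mem_nhds hu.1 hu.2))

theorem continuousOn_integral_of_continuousOn_Icc {f : ℝ → ℝ} {s T : ℝ} (hsT : s ≤ T)
    (hf : ContinuousOn f (Icc s T)) :
    ContinuousOn (fun v => ∫ σ in s..v, f σ) (Icc s T) := by
  simpa only [uIcc_of_le hsT] using
    continuousOn_primitive_interval' (hf.intervalIntegrable_of_Icc hsT) left_mem_uIcc

theorem mul_exp_neg_integral_le_of_deriv_le {y y' a b : ℝ → ℝ} {s T : ℝ} (hsT : s ≤ T)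
    (hyc : ContinuousOn y (Icc s T)) (hy : ∀ u ∈ Ioo s T, HasDerivAt y (y' u) u)
    (hac : ContinuousOn a (Icc s T)) (hbc : ContinuousOn b (Icc s T))
    (ha : ∀ u ∈ Icc s T, 0 ≤ a u) (hb : ∀ u ∈ Icc s T, 0 ≤ b u)
    (hineq : ∀ u ∈ Ioo s T, y' u ≤ a u * y u + b u) :
    y T * Real.exp (-∫ σ in s..T, a σ) ≤ y s + ∫ σ in s..T, b σ := by
  set A : ℝ → ℝ := fun v => ∫ σ in s..v, a σ
  set B : ℝ → ℝ := fun v => ∫ σ in s..v, b σ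
  have hF : AntitoneOn (fun v => y v * Real.exp (-A v) - B v) (Icc s T) := by
    refine antitoneOn_of_hasDerivWithinAt_nonpos (convex_Icc s T)
      (f' := fun u => (y' u - a u * y u) * Real.exp (-A u) - b u) ?_ ?_ ?_
    · exact (hyc.mul (continuousOn_integral_of_continuousOn_Icc hsT hac).neg.rexp).sub
        (continuousOn_integral_of_continuousOn_Icc hsT hbc)
    · intro u hu
      rw [interior_Icc] at hu
      have hE : HasDerivAt (fun v => Real.exp (-A v)) (Real.exp (-A u) * -a u) u :=
        (hasDerivAt_integral_of_continuousOn_Icc hac hu).neg.exp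
      refine ((((hy u hu).mul hE).sub
        (hasDerivAt_integral_of_continuousOn_Icc hbc hu)).congr_deriv ?_).hasDerivWithinAt
      ring
    · intro u hu
      rw [interior_Icc] at hu
      have hA : 0 ≤ A u :=
        integral_nonneg hu.1.le fun σ hσ => ha σ ⟨hσ.1, hσ.2.trans hu.2.le⟩
      have hexp_le_one : Real.exp (-A u) ≤ 1 := Real.exp_le_one_iff.2 (neg_nonpos.2 hA)
      have hbu := hb u (Ioo_subset_Icc_self hu)
      calc (y' u - a u * y u) * Real.exp (-A u) - b u
          ≤ b u * Real.exp (-A u) - b u := by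
            gcongr
            linarith [hineq u hu]
        _ ≤ 0 := by nlinarith
  simpa [A, B] using hF (left_mem_Icc.2 hsT) (right_mem_Icc.2 hsT) hsT

theorem integral_mono_left_of_nonneg {f : ℝ → ℝ} {t s T : ℝ} (hts : t ≤ s) (hsT : s ≤ T)
    (hf : ContinuousOn f (Icc t T)) (h0 : ∀ u ∈ Icc t T, 0 ≤ f u) :
    ∫ σ in s..T, f σ ≤ ∫ σ in t..T, f σ :=
  integral_mono_interval hts hsT le_rfl
    (ae_restrict_of_forall_mem measurableSet_Ioc fun u hu => h0 u (Ioc_subset_Icc_self hu))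
    (hf.intervalIntegrable_of_Icc (hts.trans hsT))

theorem le_integral_div_of_forall_le {g : ℝ → ℝ} {c t r : ℝ} (hr : 0 < r)
    (hg : IntervalIntegrable g volume t (t + r)) (h : ∀ s ∈ Icc t (t + r), c ≤ g s) :
    c ≤ (∫ s in t..t + r, g s) / r := by
  rw [le_div_iff₀ hr]
  simpa [mul_comm] using integral_mono_on (by linarith) intervalIntegrable_const hg h

theorem stmt14_general (r t₀ a₁ a₂ a₃ : ℝ) (hr : 0 < r)
    (y y' a b : ℝ → ℝ)
    (hy0 : ∀ t ≥ t₀, 0 ≤ y t) (ha0 : ∀ t ≥ t₀, 0 ≤ a t) (hb0 : ∀ t ≥ t₀, 0 ≤ b t)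
    (hac : ContinuousOn a (Ici t₀))
    (hbc : ContinuousOn b (Ici t₀))
    (hderiv : ∀ t ≥ t₀, HasDerivAt y (y' t) t)
    (hineq : ∀ t ≥ t₀, y' t ≤ a t * y t + b t)
    (hia : ∀ t ≥ t₀, (∫ s in t..t+r, a s) ≤ a₁)
    (hib : ∀ t ≥ t₀, (∫ s in t..t+r, b s) ≤ a₂)
    (hiy : ∀ t ≥ t₀, (∫ s in t..t+r, y s) ≤ a₃) :
    ∀ t ≥ t₀, y (t + r) ≤ (a₃ / r + a₂) * Real.exp a₁ := by
  intro t ht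
  have hyc : ContinuousOn y (Ici t₀) := fun u hu => (hderiv u hu).continuousAt.continuousWithinAt
  have hsub : ∀ {s}, t ≤ s → Icc s (t + r) ⊆ Ici t₀ := fun hts u hu => ht.trans (hts.trans hu.1)
  have key : ∀ s ∈ Icc t (t + r), y (t + r) * Real.exp (-a₁) - a₂ ≤ y s := by
    rintro s ⟨hts, hsr⟩
    have hG := mul_exp_neg_integral_le_of_deriv_le hsr (hyc.mono (hsub hts))
      (fun u hu => hderiv u (hsub hts (Ioo_subset_Icc_self hu))) (hac.mono (hsub hts))
      (hbc.mono (hsub hts)) (fun u hu => ha0 u (hsub hts hu)) (fun u hu => hb0 u (hsub hts hu))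
      (fun u hu => hineq u (hsub hts (Ioo_subset_Icc_self hu)))
    have hA := (integral_mono_left_of_nonneg hts hsr (hac.mono (hsub le_rfl))
      fun u hu => ha0 u (hsub le_rfl hu)).trans (hia t ht)
    have hB := (integral_mono_left_of_nonneg hts hsr (hbc.mono (hsub le_rfl))
      fun u hu => hb0 u (hsub le_rfl hu)).trans (hib t ht)
    have hexp : y (t + r) * Real.exp (-a₁) ≤ y (t + r) * Real.exp (-∫ σ in s..t + r, a σ) := by
      gcongr
      exact hy0 _ (hsub hts (right_mem_Icc.2 hsr))
    linarith
  have hmean := le_integral_div_of_forall_le hr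
    ((hyc.mono (hsub le_rfl)).intervalIntegrable_of_Icc (by linarith)) key
  calc y (t + r) = y (t + r) * Real.exp (-a₁) * Real.exp a₁ := by
        rw [mul_assoc, ← Real.exp_add, neg_add_cancel, Real.exp_zero, mul_one]
    _ ≤ ((∫ s in t..t + r, y s) / r + a₂) * Real.exp a₁ := by gcongr; linarith
    _ ≤ (a₃ / r + a₂) * Real.exp a₁ := by gcongr; exact hiy t ht

theorem stmt14 (r t₀ a₁ a₂ a₃ : ℝ) (hr : 0 < r)
    (y y' a b : ℝ → ℝ)
    (hy0 : ∀ t ≥ t₀, 0 ≤ y t) (ha0 : ∀ t ≥ t₀, 0 ≤ a t) (hb0 : ∀ t ≥ t₀, 0 ≤ b t)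
    (hyc : ContinuousOn y (Ici t₀)) (hac : ContinuousOn a (Ici t₀))
    (hbc : ContinuousOn b (Ici t₀))
    (hderiv : ∀ t ≥ t₀, HasDerivAt y (y' t) t)
    (hineq : ∀ t ≥ t₀, y' t ≤ a t * y t + b t)
    (ha1 : 0 ≤ a₁) (ha2 : 0 ≤ a₂) (ha3 : 0 ≤ a₃)
    (hia : ∀ t ≥ t₀, (∫ s in t..t+r, a s) ≤ a₁)
    (hib : ∀ t ≥ t₀, (∫ s in t..t+r, b s) ≤ a₂)
    (hiy : ∀ t ≥ t₀, (∫ s in t..t+r, y s) ≤ a₃) :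
    ∀ t ≥ t₀, y (t + r) ≤ (a₃ / r + a₂) * Real.exp a₁ :=
  stmt14_general r t₀ a₁ a₂ a₃ hr y y' a b hy0 ha0 hb0 hac hbc hderiv hineq hia hib hiy
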